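/- arXiv:1601.04210 — 5 statements merged into one kernel-verified Lean document; each statement's English description precedes it below -/
import Mathlib

section
/- Fix μ̃ > 0, σ > 0, θ̃ ∈ ℝ, S₀ > 0 and T > 0, and define the XOU futures curve f(T) := exp( e^{−μ̃T}·ln S₀ + (1 − e^{−μ̃T})(θ̃ − σ²/(2μ̃)) + (σ²/(4μ̃))(1 − e^{−2μ̃T}) ). If ln S₀ > θ̃ − (σ²/(2μ̃))(1 − e^{−μ̃T}) + ( e^{2μ̃T}/4 + σ²/(2μ̃) )^{1/2} − e^{μ̃T}/2, then the first derivative of f at T is strictly negative and the second derivative of f at T is strictly positive (the futures curve is downward-sloping and convex at T). -/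
open Real

/-! With `g = log f` one has `f' = f g'` and `f'' = f (g'² + g'')`. Writing `w = e^{-μ̃T}`,
`D = σ²/(2μ̃)` and `x = ln S₀ - θ̃ + D (1 - w)`, the exponent gives `g'(T) = -μ̃ w x` and
`g'(T)² + g''(T) = μ̃² w² (x² + e^{μ̃T} x - D)`. The hypothesis on `ln S₀` says precisely that `x`
lies beyond the positive root of `X² + e^{μ̃T} X - D`, so `x > 0` and the quadratic is positive. -/

lemma pos_and_quadratic_pos_of_sqrt_sub_lt {p q x : ℝ} (hq : 0 ≤ q)
    (hx : √(p ^ 2 / 4 + q) - p / 2 < x) :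
    0 < x ∧ 0 < x ^ 2 + p * x - q := by
  set r := √(p ^ 2 / 4 + q)
  have hr_sq : r ^ 2 = p ^ 2 / 4 + q := sq_sqrt (by positivity)
  have hr : p / 2 ≤ r := le_sqrt_of_sq_le (by linarith)
  have hfactor : x ^ 2 + p * x - q = (x - (r - p / 2)) * (x + r + p / 2) := by
    linear_combination hr_sq
  refine ⟨by linarith, hfactor ▸ mul_pos (by linarith) (by linarith [sqrt_nonneg (p ^ 2 / 4 + q)])⟩

lemma hasDerivAt_add_mul_exp_add_mul_exp (μ a b c t : ℝ) :
    HasDerivAt (fun t => c + a * exp (-μ * t) + b * exp (-2 * μ * t))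
      (-μ * a * exp (-μ * t) + -2 * μ * b * exp (-2 * μ * t)) t := by
  have h₁ := ((hasDerivAt_id' t).const_mul (-μ)).exp.const_mul a
  have h₂ := ((hasDerivAt_id' t).const_mul (-2 * μ)).exp.const_mul b
  exact (((hasDerivAt_const t c).fun_add h₁).fun_add h₂).congr_deriv (by ring)

lemma deriv_exp_comp_of_hasDerivAt {g g' : ℝ → ℝ} (hg : ∀ t, HasDerivAt g (g' t) t) :
    deriv (fun t => exp (g t)) = fun t => exp (g t) * g' t :=
  funext fun t => (hg t).exp.deriv

lemma deriv_deriv_exp_comp_of_hasDerivAt {g g' : ℝ → ℝ} {g'' t : ℝ}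
    (hg : ∀ t, HasDerivAt g (g' t) t) (hg' : HasDerivAt g' g'' t) :
    deriv (deriv fun t => exp (g t)) t = exp (g t) * (g' t ^ 2 + g'') := by
  rw [deriv_exp_comp_of_hasDerivAt hg, ((hg t).exp.fun_mul hg').deriv]
  ring

section

variable (μ a b c T : ℝ)

lemma exp_neg_mul_mul_exp_mul : exp (-μ * T) * exp (μ * T) = 1 := by
  rw [← exp_add, neg_mul, neg_add_cancel, exp_zero]

lemma exp_neg_two_mul_mul : exp (-2 * μ * T) = exp (-μ * T) ^ 2 := by
  rw [← exp_nat_mul]; ring_nf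

lemma deriv_exp_add_mul_exp_add_mul_exp :
    deriv (fun t => exp (c + a * exp (-μ * t) + b * exp (-2 * μ * t))) T =
      -(μ * exp (-μ * T) * exp (c + a * exp (-μ * T) + b * exp (-2 * μ * T)) *
        (a + 2 * b * exp (-μ * T))) := by
  rw [deriv_exp_comp_of_hasDerivAt (hasDerivAt_add_mul_exp_add_mul_exp μ a b c)]
  beta_reduce
  rw [exp_neg_two_mul_mul]
  ring

lemma deriv_deriv_exp_add_mul_exp_add_mul_exp :
    deriv (deriv fun t => exp (c + a * exp (-μ * t) + b * exp (-2 * μ * t))) T =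
      μ ^ 2 * exp (-μ * T) ^ 2 * exp (c + a * exp (-μ * T) + b * exp (-2 * μ * T)) *
        ((a + 2 * b * exp (-μ * T)) ^ 2 + exp (μ * T) * (a + 2 * b * exp (-μ * T)) + 2 * b) := by
  have hg' : HasDerivAt (fun t => -μ * a * exp (-μ * t) + -2 * μ * b * exp (-2 * μ * t))
      (-μ * (-μ * a) * exp (-μ * T) + -2 * μ * (-2 * μ * b) * exp (-2 * μ * T)) T := by
    simpa only [zero_add] using hasDerivAt_add_mul_exp_add_mul_exp μ (-μ * a) (-2 * μ * b) 0 T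
  rw [deriv_deriv_exp_comp_of_hasDerivAt (hasDerivAt_add_mul_exp_add_mul_exp μ a b c) hg',
    exp_neg_two_mul_mul]
  linear_combination (-(μ ^ 2 * exp (-μ * T) * exp (c + a * exp (-μ * T) + b * exp (-μ * T) ^ 2) *
    (a + 2 * b * exp (-μ * T)))) * exp_neg_mul_mul_exp_mul μ T

end

theorem xou_term_structure_down_convex_general (μt θt σ S0 T : ℝ) (hμ : 0 < μt)
    (f : ℝ → ℝ)
    (hf : f = fun T : ℝ => exp (exp (-μt * T) * log S0
      + (1 - exp (-μt * T)) * (θt - σ ^ 2 / (2 * μt))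
      + σ ^ 2 / (4 * μt) * (1 - exp (-2 * μt * T))))
    (hln : θt - σ ^ 2 / (2 * μt) * (1 - exp (-μt * T)) + Real.sqrt (exp (2 * μt * T) / 4 + σ ^ 2 / (2 * μt)) - exp (μt * T) / 2 < log S0) :
    deriv f T < 0 ∧ 0 < deriv (deriv f) T := by
  set D := σ ^ 2 / (2 * μt)
  have hf' : f = fun t => exp (θt - D / 2 + (log S0 - θt + D) * exp (-μt * t)
      + -(D / 2) * exp (-2 * μt * t)) := by
    rw [hf]; funext t; congr 1; ring
  set x := log S0 - θt + D + 2 * -(D / 2) * exp (-μt * T) with hx_def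
  have hx : √(exp (μt * T) ^ 2 / 4 + D) - exp (μt * T) / 2 < x := by
    rw [← exp_nat_mul, Nat.cast_ofNat, ← mul_assoc]; linarith
  obtain ⟨hx_pos, hquad⟩ := pos_and_quadratic_pos_of_sqrt_sub_lt (by positivity) hx
  rw [hf', deriv_exp_add_mul_exp_add_mul_exp, deriv_deriv_exp_add_mul_exp_add_mul_exp, ← hx_def]
  exact ⟨neg_neg_of_pos (mul_pos (by positivity) hx_pos), mul_pos (by positivity) (by linarith)⟩

/-- XOU futures term structure: downward-sloping and convex when ln S₀ exceeds the upper threshold. -/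
theorem xou_term_structure_down_convex (μt θt σ S0 T : ℝ) (hμ : 0 < μt) (hσ : 0 < σ) (hS : 0 < S0)
    (hT : 0 < T) (f : ℝ → ℝ)
    (hf : f = fun T : ℝ => exp (exp (-μt * T) * log S0
      + (1 - exp (-μt * T)) * (θt - σ ^ 2 / (2 * μt))
      + σ ^ 2 / (4 * μt) * (1 - exp (-2 * μt * T))))
    (hln : θt - σ ^ 2 / (2 * μt) * (1 - exp (-μt * T)) + Real.sqrt (exp (2 * μt * T) / 4 + σ ^ 2 / (2 * μt)) - exp (μt * T) / 2 < log S0) :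
    deriv f T < 0 ∧ 0 < deriv (deriv f) T :=
  xou_term_structure_down_convex_general μt θt σ S0 T hμ f hf hln
end

section
/- Fix μ̃ > 0, σ > 0, θ̃ ∈ ℝ, S₀ > 0 and T > 0, and define the XOU futures curve f(T) := exp( e^{−μ̃T}·ln S₀ + (1 − e^{−μ̃T})(θ̃ − σ²/(2μ̃)) + (σ²/(4μ̃))(1 − e^{−2μ̃T}) ). If θ̃ − (σ²/(2μ̃))(1 − e^{−μ̃T}) < ln S₀ < θ̃ − (σ²/(2μ̃))(1 − e^{−μ̃T}) + ( e^{2μ̃T}/4 + σ²/(2μ̃) )^{1/2} − e^{μ̃T}/2, then the first derivative of f at T is strictly negative and the second derivative of f at T is strictly negative (the futures curve is downward-sloping and concave at T). -/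
/-!
Write `f = exp ∘ g` with `g` the log-futures curve. With `u = e^{-μ̃t}`, `g' = -μ̃ u D` where
`D = ln S₀ - m(t)` is the distance of the log-spot to the lower band `m(t)` of the hypothesis, and
`g'² + g'' = μ̃² u² (D² + e^{μ̃t} D - σ²/(2μ̃))`. So `f' < 0` exactly when `D > 0`, and `f'' < 0` when
moreover `D` lies below the positive root of `X² + e^{μ̃t} X - σ²/(2μ̃)`, which is the upper band.
-/

open Real

theorem sq_add_mul_lt_of_lt_sqrt_sub {x b c : ℝ} (hx : 0 ≤ x + b / 2)
    (h : x < √(b ^ 2 / 4 + c) - b / 2) : x ^ 2 + b * x < c := by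
  have := (lt_sqrt hx).1 (by linarith : x + b / 2 < √(b ^ 2 / 4 + c))
  linarith

theorem hasDerivAt_exp_const_mul (a t : ℝ) :
    HasDerivAt (fun s => exp (a * s)) (a * exp (a * t)) t := by
  simpa [mul_comm] using ((hasDerivAt_id t).const_mul a).exp

theorem deriv_deriv_exp_comp {g g' : ℝ → ℝ} {g'' x : ℝ} (hg : ∀ t, HasDerivAt g (g' t) t)
    (hg' : HasDerivAt g' g'' x) :
    deriv (deriv fun t => exp (g t)) x = exp (g x) * (g' x ^ 2 + g'') := by
  have hderiv : (deriv fun t => exp (g t)) = fun t => exp (g t) * g' t :=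
    funext fun t => (hg t).exp.deriv
  rw [hderiv]
  exact ((hg x).exp.mul hg').deriv.trans (by ring)

namespace XOU

noncomputable def logFutures (μ θ σ x T : ℝ) : ℝ :=
  exp (-μ * T) * x + (1 - exp (-μ * T)) * (θ - σ ^ 2 / (2 * μ))
    + σ ^ 2 / (4 * μ) * (1 - exp (-2 * μ * T))

noncomputable def lowerBand (μ θ σ T : ℝ) : ℝ :=
  θ - σ ^ 2 / (2 * μ) * (1 - exp (-μ * T))

noncomputable def logFuturesSlope (μ θ σ x T : ℝ) : ℝ :=
  -μ * exp (-μ * T) * (x - lowerBand μ θ σ T)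

variable (μ θ σ x : ℝ)

theorem hasDerivAt_logFutures (t : ℝ) :
    HasDerivAt (logFutures μ θ σ x) (logFuturesSlope μ θ σ x t) t := by
  have hu := hasDerivAt_exp_const_mul (-μ) t
  have hu2 := hasDerivAt_exp_const_mul (-2 * μ) t
  have h := ((hu.mul_const x).add ((hu.const_sub 1).mul_const (θ - σ ^ 2 / (2 * μ)))).add
    ((hu2.const_sub 1).const_mul (σ ^ 2 / (4 * μ)))
  refine h.congr_deriv ?_
  rw [logFuturesSlope, lowerBand, show -2 * μ * t = -μ * t + -μ * t by ring, exp_add]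
  rcases eq_or_ne μ 0 with rfl | hμ
  · simp
  · field_simp
    ring

theorem hasDerivAt_logFuturesSlope (t : ℝ) :
    HasDerivAt (logFuturesSlope μ θ σ x)
      (μ ^ 2 * exp (-μ * t) * (x - lowerBand μ θ σ t - σ ^ 2 / (2 * μ) * exp (-μ * t))) t := by
  have hu := hasDerivAt_exp_const_mul (-μ) t
  have h := (hu.const_mul (-μ)).mul
    ((((hu.const_sub 1).const_mul (σ ^ 2 / (2 * μ))).const_sub θ).const_sub x)
  refine h.congr_deriv ?_
  rw [lowerBand]
  ring

theorem sq_logFuturesSlope_add (t : ℝ) :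
    logFuturesSlope μ θ σ x t ^ 2
        + μ ^ 2 * exp (-μ * t) * (x - lowerBand μ θ σ t - σ ^ 2 / (2 * μ) * exp (-μ * t))
      = μ ^ 2 * exp (-μ * t) ^ 2 * ((x - lowerBand μ θ σ t) ^ 2
        + exp (μ * t) * (x - lowerBand μ θ σ t) - σ ^ 2 / (2 * μ)) := by
  have hinv : exp (-μ * t) * exp (μ * t) = 1 := by rw [← exp_add]; simp
  rw [logFuturesSlope]
  linear_combination -μ ^ 2 * exp (-μ * t) * (x - lowerBand μ θ σ t) * hinv

end XOU

theorem xou_term_structure_down_concave_general (μt θt σ S0 T : ℝ) (hμ : 0 < μt) (f : ℝ → ℝ)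
    (hf : f = fun T : ℝ => exp (exp (-μt * T) * log S0
      + (1 - exp (-μt * T)) * (θt - σ ^ 2 / (2 * μt))
      + σ ^ 2 / (4 * μt) * (1 - exp (-2 * μt * T))))
    (hln1 : θt - σ ^ 2 / (2 * μt) * (1 - exp (-μt * T)) < log S0) (hln2 : log S0 < θt - σ ^ 2 / (2 * μt) * (1 - exp (-μt * T)) + Real.sqrt (exp (2 * μt * T) / 4 + σ ^ 2 / (2 * μt)) - exp (μt * T) / 2) :
    deriv f T < 0 ∧ deriv (deriv f) T < 0 := by
  change f = fun T => exp (XOU.logFutures μt θt σ (log S0) T) at hf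
  subst hf
  set D := log S0 - XOU.lowerBand μt θt σ T
  have hD : 0 < D := sub_pos.2 hln1
  have hquad : D ^ 2 + exp (μt * T) * D < σ ^ 2 / (2 * μt) := by
    refine sq_add_mul_lt_of_lt_sqrt_sub (by positivity) ?_
    rw [← exp_nat_mul, show ((2 : ℕ) : ℝ) * (μt * T) = 2 * μt * T by push_cast; ring]
    simp only [D, XOU.lowerBand]
    linarith
  constructor
  · rw [(XOU.hasDerivAt_logFutures μt θt σ _ T).exp.deriv, XOU.logFuturesSlope]
    exact mul_neg_of_pos_of_neg (exp_pos _)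
      (mul_neg_of_neg_of_pos (mul_neg_of_neg_of_pos (neg_neg_of_pos hμ) (exp_pos _)) hD)
  · rw [deriv_deriv_exp_comp (XOU.hasDerivAt_logFutures μt θt σ _)
      (XOU.hasDerivAt_logFuturesSlope μt θt σ _ T), XOU.sq_logFuturesSlope_add]
    exact mul_neg_of_pos_of_neg (exp_pos _) (mul_neg_of_pos_of_neg (by positivity)
      (by linarith))

/-- XOU futures term structure: downward-sloping and concave in the middle-upper band. -/
theorem xou_term_structure_down_concave (μt θt σ S0 T : ℝ) (hμ : 0 < μt) (hσ : 0 < σ) (hS : 0 < S0)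
    (hT : 0 < T) (f : ℝ → ℝ)
    (hf : f = fun T : ℝ => exp (exp (-μt * T) * log S0
      + (1 - exp (-μt * T)) * (θt - σ ^ 2 / (2 * μt))
      + σ ^ 2 / (4 * μt) * (1 - exp (-2 * μt * T))))
    (hln1 : θt - σ ^ 2 / (2 * μt) * (1 - exp (-μt * T)) < log S0) (hln2 : log S0 < θt - σ ^ 2 / (2 * μt) * (1 - exp (-μt * T)) + Real.sqrt (exp (2 * μt * T) / 4 + σ ^ 2 / (2 * μt)) - exp (μt * T) / 2) :
    deriv f T < 0 ∧ deriv (deriv f) T < 0 :=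
  xou_term_structure_down_concave_general μt θt σ S0 T hμ f hf hln1 hln2
end

section
/- Fix μ, θ, μ̃, σ ∈ ℝ with μ̃ > 0 and μ̃ > μ, and let τ ≥ 0 and s > 0. Set ln f := e^{−μ̃τ}·ln s + (1 − e^{−μ̃τ})(θ − σ²/(2μ̃)) + (σ²/(4μ̃))(1 − e^{−2μ̃τ}). If the risk-neutral long-run mean θ̃ equals the historical long-run mean θ, then the drift coefficient ( ln f + (e^{−μ̃τ} − 1)(θ − σ²/(2μ̃)) + (σ²/(4μ̃))(e^{−2μ̃τ} − 1) )(μ̃ − μ) + e^{−μ̃τ}( μθ − μ̃θ ) is strictly positive if and only if ln s > θ. -/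
open Real

/-- Under the XOU spot model with `θ̃ = θ`, the drift coefficient of the futures SDE is
strictly positive iff `ln s > θ`. -/
theorem xou_futures_drift_sign_equal_means (μ θ μt σ τ s : ℝ) (hμt : 0 < μt) (hμ : μ < μt)
    (hτ : 0 ≤ τ) (hs : 0 < s) (θt : ℝ) (hθt : θt = θ) (lnf : ℝ)
    (hlnf : lnf = exp (-μt * τ) * log s + (1 - exp (-μt * τ)) * (θ - σ ^ 2 / (2 * μt))
      + σ ^ 2 / (4 * μt) * (1 - exp (-2 * μt * τ))) :
    0 < (lnf + (exp (-μt * τ) - 1) * (θ - σ ^ 2 / (2 * μt))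
          + σ ^ 2 / (4 * μt) * (exp (-2 * μt * τ) - 1)) * (μt - μ)
        + exp (-μt * τ) * (μ * θ - μt * θ)
      ↔ θ < log s := by
  have hE : 0 < exp (-μt * τ) := exp_pos _
  have key : (lnf + (exp (-μt * τ) - 1) * (θ - σ ^ 2 / (2 * μt))
          + σ ^ 2 / (4 * μt) * (exp (-2 * μt * τ) - 1)) * (μt - μ)
        + exp (-μt * τ) * (μ * θ - μt * θ)
      = exp (-μt * τ) * (μt - μ) * (log s - θ) := by
    subst hlnf; ring
  rw [key]
  constructor
  · intro h
    nlinarith [mul_pos hE (sub_pos.mpr hμ)]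
  · intro h
    have := mul_pos (mul_pos hE (sub_pos.mpr hμ)) (sub_pos.mpr h)
    linarith
end

section
/- Fix μ, θ, μ̃, θ̃ ∈ ℝ with μ̃ > 0, a natural number n ≥ 1, maturities 0 < T₁ < … < T_n, and a time t ∈ (T_{n−1}, T_n]. Let (Ω, F, P) be a probability space and let S₀ ∈ ℝ and S_t, S_{T₁}, …, S_{T_{n−1}} be integrable real random variables such that E[S_u] = (S₀ − θ)e^{−μu} + θ for each u ∈ {t, T₁, …, T_{n−1}}. Define the futures prices f^{(j)}_u := (S_u − θ̃)e^{−μ̃(T_j − u)} + θ̃ (with f^{(1)}_0 := (S₀ − θ̃)e^{−μ̃T₁} + θ̃), and the cumulative roll yield R(0,t) := ( f^{(n)}_t − S_t ) − ( f^{(1)}_0 − S₀ ) + Σ_{j=1}^{n−1} ( S_{T_j} − f^{(j+1)}_{T_j} ). Then E[R(0,t)] = ( (S₀ − θ)e^{−μt} + θ − θ̃ )( e^{−μ̃(T_n − t)} − 1 ) − ( S₀ − θ̃ )( e^{−μ̃T₁} − 1 ) + Σ_{j=1}^{n−1} ( (S₀ − θ)e^{−μT_j} + θ − θ̃ )( 1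 − e^{−μ̃(T_{j+1} − T_j)} ). -/
/-!
The roll yield is an affine function of the spot prices it involves, since each futures price
is affine in the current spot. Expectation therefore commutes with it: the expected roll yield is
the roll yield evaluated at the expected spots, which are the historical OU means.
-/

open Real Finset MeasureTheory

/-- `τ` is the time to maturity, `x` the current spot, `(κ, θ)` the risk-neutral OU parameters. -/
noncomputable def futuresPrice (κ θ τ x : ℝ) : ℝ :=
  (x - θ) * exp (-κ * τ) + θ

/-- Futures prices are given by their time to maturity: `τ0` at time `0`, `τ` at the current
time and `τs j` for the contract entered at the `j`-th roll, at spot `ST j`. -/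
noncomputable def rollYield (κ θ S0 τ0 St τ : ℝ) (s : Finset ℕ) (ST τs : ℕ → ℝ) : ℝ :=
  (futuresPrice κ θ τ St - St) - (futuresPrice κ θ τ0 S0 - S0)
    + ∑ j ∈ s, (ST j - futuresPrice κ θ (τs j) (ST j))

theorem futuresPrice_sub_self (κ θ τ x : ℝ) :
    futuresPrice κ θ τ x - x = (x - θ) * (exp (-κ * τ) - 1) := by
  unfold futuresPrice
  ring

theorem self_sub_futuresPrice (κ θ τ x : ℝ) :
    x - futuresPrice κ θ τ x = (x - θ) * (1 - exp (-κ * τ)) := by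
  unfold futuresPrice
  ring

theorem rollYield_eq (κ θ S0 τ0 St τ : ℝ) (s : Finset ℕ) (ST τs : ℕ → ℝ) :
    rollYield κ θ S0 τ0 St τ s ST τs
      = (St - θ) * (exp (-κ * τ) - 1) - (S0 - θ) * (exp (-κ * τ0) - 1)
        + ∑ j ∈ s, (ST j - θ) * (1 - exp (-κ * τs j)) := by
  simp only [rollYield, futuresPrice_sub_self, self_sub_futuresPrice]

section Expectation

variable {Ω : Type*} [MeasurableSpace Ω] {P : Measure Ω} {X : Ω → ℝ}

theorem MeasureTheory.Integrable.futuresPrice [IsFiniteMeasure P] (hX : Integrable X P)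
    (κ θ τ : ℝ) :
    Integrable (fun ω => futuresPrice κ θ τ (X ω)) P :=
  ((hX.sub (integrable_const θ)).mul_const _).add (integrable_const θ)

variable [IsProbabilityMeasure P]

theorem integral_futuresPrice (hX : Integrable X P) (κ θ τ : ℝ) :
    ∫ ω, futuresPrice κ θ τ (X ω) ∂P = futuresPrice κ θ τ (∫ ω, X ω ∂P) := by
  have hShifted : Integrable (fun ω => (X ω - θ) * exp (-κ * τ)) P :=
    (hX.sub (integrable_const θ)).mul_const _
  unfold futuresPrice
  rw [integral_add hShifted (integrable_const θ), integral_mul_const,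
    integral_sub hX (integrable_const θ)]
  simp only [integral_const, probReal_univ, one_smul]

theorem integral_rollYield (κ θ S0 τ0 τ : ℝ) (s : Finset ℕ) (τs : ℕ → ℝ) {St : Ω → ℝ}
    {ST : ℕ → Ω → ℝ} (hSt : Integrable St P) (hST : ∀ j ∈ s, Integrable (ST j) P) :
    ∫ ω, rollYield κ θ S0 τ0 (St ω) τ s (fun j => ST j ω) τs ∂P
      = rollYield κ θ S0 τ0 (∫ ω, St ω ∂P) τ s (fun j => ∫ ω, ST j ω ∂P) τs := by
  have hSpot : Integrable (fun ω => futuresPrice κ θ τ (St ω) - St ω) P :=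
    (hSt.futuresPrice κ θ τ).sub hSt
  have hInitial : Integrable (fun ω => futuresPrice κ θ τ (St ω) - St ω
      - (futuresPrice κ θ τ0 S0 - S0)) P :=
    hSpot.sub (integrable_const _)
  have hRoll : ∀ j ∈ s, Integrable (fun ω => ST j ω - futuresPrice κ θ (τs j) (ST j ω)) P :=
    fun j hj => (hST j hj).sub ((hST j hj).futuresPrice κ θ (τs j))
  simp only [rollYield]
  rw [integral_add hInitial (integrable_finsetSum s hRoll),
    integral_sub hSpot (integrable_const _),
    integral_sub (hSt.futuresPrice κ θ τ) hSt, integral_futuresPrice hSt,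
    integral_finsetSum s hRoll, integral_const, probReal_univ, one_smul]
  refine congrArg _ (sum_congr rfl fun j hj => ?_)
  rw [integral_sub (hST j hj) ((hST j hj).futuresPrice κ θ (τs j)),
    integral_futuresPrice (hST j hj)]

end Expectation

theorem expected_roll_yield_ou_general (μ θ μt θt : ℝ)
    (n : ℕ) (T : ℕ → ℝ) (t : ℝ)
    (Ω : Type*) [MeasurableSpace Ω] (P : Measure Ω) [IsProbabilityMeasure P]
    (S0 : ℝ) (St : Ω → ℝ) (ST : ℕ → Ω → ℝ)
    (hSt_int : Integrable St P)
    (hST_int : ∀ j ∈ Icc 1 (n - 1), Integrable (ST j) P)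
    (hSt_mean : ∫ ω, St ω ∂P = (S0 - θ) * exp (-μ * t) + θ)
    (hST_mean : ∀ j ∈ Icc 1 (n - 1), ∫ ω, ST j ω ∂P = (S0 - θ) * exp (-μ * T j) + θ) :
    ∫ ω, ((((St ω - θt) * exp (-μt * (T n - t)) + θt) - St ω)
        - (((S0 - θt) * exp (-μt * T 1) + θt) - S0)
        + ∑ j ∈ Icc 1 (n - 1),
            (ST j ω - ((ST j ω - θt) * exp (-μt * (T (j + 1) - T j)) + θt))) ∂P
      = ((S0 - θ) * exp (-μ * t) + θ - θt) * (exp (-μt * (T n - t)) - 1)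
        - (S0 - θt) * (exp (-μt * T 1) - 1)
        + ∑ j ∈ Icc 1 (n - 1),
            ((S0 - θ) * exp (-μ * T j) + θ - θt) * (1 - exp (-μt * (T (j + 1) - T j))) := by
  -- the integrand is `rollYield` at the spots `St ω`, `ST j ω`, up to unfolding
  refine (integral_rollYield μt θt S0 (T 1) (T n - t) (Icc 1 (n - 1)) (fun j => T (j + 1) - T j)
    hSt_int hST_int).trans ?_
  rw [rollYield_eq, hSt_mean]
  exact congrArg _ (sum_congr rfl fun j hj => by rw [hST_mean j hj])

/-- Expected cumulative roll yield under the OU spot model. `St` is the spot at time `t`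
and `ST j` the spot at maturity `T j`; each has the OU historical mean
`(S₀ − θ)e^{−μu} + θ`. The futures price with maturity `T` at time `u` is
`(S_u − θ̃)e^{−μ̃(T−u)} + θ̃`, and the cumulative roll yield up to `t ∈ (T_{n−1}, T_n]` is
`(f_t^{T_n} − S_t) − (f_0^{T_1} − S_0) + Σ_{j=1}^{n−1}(S_{T_j} − f_{T_j}^{T_{j+1}})`. -/
theorem expected_roll_yield_ou (μ θ μt θt : ℝ) (hμt : 0 < μt)
    (n : ℕ) (hn : 1 ≤ n) (T : ℕ → ℝ) (hT1 : 0 < T 1)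
    (hTmono : ∀ j, 1 ≤ j → j < n → T j < T (j + 1)) (t : ℝ)
    (ht : T (n - 1) < t ∧ t ≤ T n)
    (Ω : Type*) [MeasurableSpace Ω] (P : Measure Ω) [IsProbabilityMeasure P]
    (S0 : ℝ) (St : Ω → ℝ) (ST : ℕ → Ω → ℝ)
    (hSt_int : Integrable St P)
    (hST_int : ∀ j ∈ Icc 1 (n - 1), Integrable (ST j) P)
    (hSt_mean : ∫ ω, St ω ∂P = (S0 - θ) * exp (-μ * t) + θ)
    (hST_mean : ∀ j ∈ Icc 1 (n - 1), ∫ ω, ST j ω ∂P = (S0 - θ) * exp (-μ * T j) + θ) :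
    ∫ ω, ((((St ω - θt) * exp (-μt * (T n - t)) + θt) - St ω)
        - (((S0 - θt) * exp (-μt * T 1) + θt) - S0)
        + ∑ j ∈ Icc 1 (n - 1),
            (ST j ω - ((ST j ω - θt) * exp (-μt * (T (j + 1) - T j)) + θt))) ∂P
      = ((S0 - θ) * exp (-μ * t) + θ - θt) * (exp (-μt * (T n - t)) - 1)
        - (S0 - θt) * (exp (-μt * T 1) - 1)
        + ∑ j ∈ Icc 1 (n - 1),
            ((S0 - θ) * exp (-μ * T j) + θ - θt) * (1 - exp (-μt * (T (j + 1) - T j))) :=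
  expected_roll_yield_ou_general μ θ μt θt n T t Ω P S0 St ST hSt_int hST_int hSt_mean hST_mean
end

section
/- Fix μ > 0, θ ∈ ℝ, μ̃ > 0, θ̃ ∈ ℝ, σ > 0, S₀ > 0, and times 0 ≤ t ≤ T. Let ν be the real Gaussian measure with mean m_P := e^{−μt}·ln S₀ + (1 − e^{−μt})(θ − σ²/(2μ)) and variance v_P := σ²(1 − e^{−2μt})/(2μ). Then ∫ exp( e^{−μ̃(T−t)}·y + (1 − e^{−μ̃(T−t)})(θ̃ − σ²/(2μ̃)) + (σ²/(4μ̃))(1 − e^{−2μ̃(T−t)}) ) dν(y) = exp( e^{−μ̃(T−t)−μt}·ln S₀ + (θ − σ²/(2μ))(1 − e^{−μt})e^{−μ̃(T−t)} + (σ²/(4μ))e^{−2μ̃(T−t)}(1 − e^{−2μt}) + (1 − e^{−μ̃(T−t)})(θ̃ − σ²/(2μ̃)) + (σ²/(4μ̃))(1 − e^{−2μ̃(T−t)}) ), i.e. the historical expectation of the XOU futures price E[f_t^T] equals the first exponential term in the paper's expected roll yield formula Y₁(t). -/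
open Real MeasureTheory ProbabilityTheory
open scoped NNReal ENNReal

lemma integral_rexp_quadratic {b : ℝ} (hb : b < 0) (c d : ℝ) :
    ∫ x : ℝ, rexp (b * x ^ 2 + c * x + d)
      = Real.sqrt (π / -b) * rexp (d - c ^ 2 / (4 * b)) := by
  have hπb : (0:ℝ) ≤ π / -b := div_nonneg Real.pi_pos.le (by linarith)
  have h := integral_cexp_quadratic (b := (b:ℂ)) (by simpa using hb) (c : ℂ) (d : ℂ)
  have h1 : ((π : ℂ) / -(b : ℂ)) ^ (1/2 : ℂ) = ((Real.sqrt (π / -b) : ℝ) : ℂ) := by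
    rw [show ((π : ℂ) / -(b : ℂ)) = (((π / -b : ℝ)) : ℂ) by push_cast; ring,
      show ((1:ℂ)/2) = ((1/2 : ℝ) : ℂ) by norm_num,
      ← Complex.ofReal_cpow hπb]
    norm_num [Real.sqrt_eq_rpow]
  apply Complex.ofReal_injective
  rw [show ((∫ x : ℝ, rexp (b * x ^ 2 + c * x + d) : ℝ) : ℂ)
      = ∫ x : ℝ, ((rexp (b * x ^ 2 + c * x + d) : ℝ) : ℂ) from (integral_ofReal (𝕜 := ℂ)).symm]
  simp_rw [Complex.ofReal_exp, Complex.ofReal_add, Complex.ofReal_mul, Complex.ofReal_pow]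
  rw [h, h1]
  push_cast
  ring

lemma gaussian_mgf (m : ℝ) (v : ℝ≥0) (a c : ℝ) :
    ∫ y, rexp (a * y + c) ∂(gaussianReal m v)
      = rexp (a * m + (v : ℝ) * a ^ 2 / 2 + c) := by
  by_cases hv : v = 0
  · subst hv
    rw [gaussianReal_zero_var, integral_dirac]
    norm_num
  · rw [gaussianReal_of_var_ne_zero _ hv]
    have hvpos : (0:ℝ) < (v:ℝ) := by positivity
    have hpdf : gaussianPDF m v = fun x ↦ ((gaussianPDFReal m v x).toNNReal : ℝ≥0∞) := by
      ext x
      rw [gaussianPDF_def]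
      simp [ENNReal.ofReal]
    rw [hpdf, integral_withDensity_eq_integral_smul
        (by exact (measurable_gaussianPDFReal m v).real_toNNReal) _]
    have key : (fun y : ℝ ↦ ((gaussianPDFReal m v y).toNNReal : ℝ≥0) • rexp (a * y + c))
        = fun y : ℝ ↦ (Real.sqrt (2 * π * v))⁻¹
          * rexp ((-(1/(2*(v:ℝ)))) * y ^ 2 + (m / v + a) * y + (c - m ^ 2 / (2 * v))) := by
      funext y
      rw [NNReal.smul_def, smul_eq_mul,
        Real.coe_toNNReal _ (gaussianPDFReal_nonneg m v y), gaussianPDFReal]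
      rw [mul_assoc, ← Real.exp_add]
      congr 1
      field_simp
      ring
    rw [key, integral_const_mul,
      integral_rexp_quadratic (neg_lt_zero.mpr (by positivity)) _ _]
    have hs : Real.sqrt (π / -(-(1/(2*(v:ℝ))))) = Real.sqrt (2 * π * v) := by
      congr 1
      field_simp
    rw [hs, ← mul_assoc, inv_mul_cancel₀ (by positivity), one_mul]
    congr 1
    field_simp
    ring

/-- The historical expectation of the XOU futures price: the historical log-spot at time
`t` is Gaussian with mean `e^{−μt} ln S₀ + (1 − e^{−μt})(θ − σ²/(2μ))` and variance
`σ²(1 − e^{−2μt})/(2μ)`, and integrating the futures price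
`exp(e^{−μ̃(T−t)} y + (1 − e^{−μ̃(T−t)})(θ̃ − σ²/(2μ̃)) + (σ²/(4μ̃))(1 − e^{−2μ̃(T−t)}))`
against it yields the first exponential term in the expected roll yield formula. -/
theorem xou_expected_futures_price (μ θ μt θt σ S0 t T : ℝ) (hμ : 0 < μ) (hμt : 0 < μt)
    (hσ : 0 < σ) (hS0 : 0 < S0) (ht : 0 ≤ t) (htT : t ≤ T) :
    ∫ y, exp (exp (-μt * (T - t)) * y
          + (1 - exp (-μt * (T - t))) * (θt - σ ^ 2 / (2 * μt))
          + σ ^ 2 / (4 * μt) * (1 - exp (-2 * μt * (T - t))))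
        ∂(gaussianReal
            (exp (-μ * t) * log S0 + (1 - exp (-μ * t)) * (θ - σ ^ 2 / (2 * μ)))
            ((σ ^ 2 * (1 - exp (-2 * μ * t)) / (2 * μ)).toNNReal))
      = exp (exp (-μt * (T - t) - μ * t) * log S0
          + (θ - σ ^ 2 / (2 * μ)) * (1 - exp (-μ * t)) * exp (-μt * (T - t))
          + σ ^ 2 / (4 * μ) * exp (-2 * μt * (T - t)) * (1 - exp (-2 * μ * t))
          + (1 - exp (-μt * (T - t))) * (θt - σ ^ 2 / (2 * μt))
          + σ ^ 2 / (4 * μt) * (1 - exp (-2 * μt * (T - t)))) := by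
  have hvar : (0:ℝ) ≤ σ ^ 2 * (1 - exp (-2 * μ * t)) / (2 * μ) := by
    have : exp (-2 * μ * t) ≤ 1 := by
      rw [Real.exp_le_one_iff]
      nlinarith
    have h1 : (0:ℝ) ≤ 1 - exp (-2 * μ * t) := by linarith
    positivity
  have hmgf := gaussian_mgf
    (exp (-μ * t) * log S0 + (1 - exp (-μ * t)) * (θ - σ ^ 2 / (2 * μ)))
    ((σ ^ 2 * (1 - exp (-2 * μ * t)) / (2 * μ)).toNNReal)
    (exp (-μt * (T - t)))
    ((1 - exp (-μt * (T - t))) * (θt - σ ^ 2 / (2 * μt))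
      + σ ^ 2 / (4 * μt) * (1 - exp (-2 * μt * (T - t))))
  simp only [← add_assoc] at hmgf
  rw [hmgf, Real.coe_toNNReal _ hvar]
  congr 1
  have e1 : exp (-μt * (T - t) - μ * t) = exp (-μt * (T - t)) * exp (-μ * t) := by
    rw [← Real.exp_add]; ring_nf
  have e2 : exp (-2 * μt * (T - t)) = exp (-μt * (T - t)) ^ 2 := by
    rw [← Real.exp_nat_mul]; ring_nf
  rw [e1, e2]
  field_simp
  ring
end
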